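/- Let E be a lattice-ordered effect algebra. Then E is an MV-effect algebra if and only if for all a, b ∈ E there exist a₁, b₁, c ∈ E such that a₁ ⊕ b₁ ⊕ c is defined, a₁ ⊕ c = a, and b₁ ⊕ c = b. -/

import Mathlib

/-- An effect algebra: a partial algebra `(α; ⊕, 0, 1)`.  The partial operation is
encoded by a total function `add` together with a definedness predicate `D`. -/
structure EffectAlgebra (α : Type*) where
  D : α → α → Prop
  add : α → α → α
  zero : α
  one : α
  comm_def : ∀ a b, D a b → D b a
  comm : ∀ a b, D a b → add a b = add b a
  assoc_def₁ : ∀ a b c, D a b → D (add a b) c → D b c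
  assoc_def₂ : ∀ a b c, D a b → D (add a b) c → D a (add b c)
  assoc : ∀ a b c, D a b → D (add a b) c → add (add a b) c = add a (add b c)
  orth_exists : ∀ a, ∃! b, D a b ∧ add a b = one
  add_one : ∀ a, D a one → a = zero

namespace EffectAlgebra

variable {α : Type*}
open Classical

/-- The induced order: `a ≤ b` iff `∃ c, a ⊕ c = b`. -/
def le (E : EffectAlgebra α) (a b : α) : Prop := ∃ c, E.D a c ∧ E.add a c = b

/-- The orthosupplement `a'`. -/
noncomputable def orth (E : EffectAlgebra α) (a : α) : α := (E.orth_exists a).choose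

/-- Partial difference: `sub b a = b ⊖ a`, intended for `a ≤ b`. -/
noncomputable def sub (E : EffectAlgebra α) (b a : α) : α :=
  if h : ∃ c, E.D a c ∧ E.add a c = b then h.choose else E.zero

end EffectAlgebra

/-!
Write `m = a ∧ b`, `a = m ⊕ p`, `b = m ⊕ q`. In an MV-effect algebra `(a ∨ b) ⊖ a = q`, so
`a ⊕ q` is defined and `(p, q, m)` is a common refinement of `a` and `b`.

Conversely, a common refinement through `c` can be pushed up to one through any `m` with
`c ≤ m ≤ a, b`, in particular through `m = a ∧ b`. Then `a ⊕ q = b ⊕ p` is an upper bound of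
`a` and `b`, say `a ⊕ q = (a ∨ b) ⊕ r`. Cancellation gives `r ≤ p` and `r ≤ q`, so `m ⊕ r` is a
lower bound of `a` and `b`, hence `m ⊕ r ≤ m` and `r = 0`. Thus `a ∨ b = a ⊕ q`, i.e.
`(a ∨ b) ⊖ a = q = b ⊖ (a ∧ b)`.
-/

namespace EffectAlgebra

variable {α : Type*} {E : EffectAlgebra α} {a b c m x y : α}

lemma D_symm (h : E.D a b) : E.D b a := E.comm_def _ _ h

lemma add_comm_of_D (h : E.D a b) : E.add a b = E.add b a := E.comm _ _ h

lemma D_left_of_D_add (h : E.D a b) (h' : E.D (E.add a b) c) : E.D a c := by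
  rw [add_comm_of_D h] at h'
  exact E.assoc_def₁ _ _ _ (D_symm h) h'

lemma add_assoc_of_D_right (hbc : E.D b c) (h : E.D a (E.add b c)) :
    E.D a b ∧ E.D (E.add a b) c ∧ E.add (E.add a b) c = E.add a (E.add b c) := by
  have hca : E.D c a := E.assoc_def₁ _ _ _ hbc (D_symm h)
  have hb_ca : E.D b (E.add c a) := E.assoc_def₂ _ _ _ hbc (D_symm h)
  have hab : E.D a b := E.assoc_def₁ _ _ _ hca (D_symm hb_ca)
  have habc : E.D (E.add a b) c := D_symm (E.assoc_def₂ _ _ _ hca (D_symm hb_ca))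
  exact ⟨hab, habc, E.assoc _ _ _ hab habc⟩

lemma add_right_comm_of_D (h : E.D a b) (h' : E.D (E.add a b) c) :
    E.D (E.add a c) b ∧ E.add (E.add a c) b = E.add (E.add a b) c := by
  have ha_bc : E.D a (E.add b c) := E.assoc_def₂ _ _ _ h h'
  rw [add_comm_of_D (E.assoc_def₁ _ _ _ h h')] at ha_bc
  obtain ⟨hac, hacb, e⟩ := add_assoc_of_D_right (D_symm (E.assoc_def₁ _ _ _ h h')) ha_bc
  refine ⟨hacb, ?_⟩
  rw [e, E.assoc _ _ _ h h', add_comm_of_D (E.assoc_def₁ _ _ _ h h')]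

lemma D_orth : E.D a (E.orth a) := (E.orth_exists a).choose_spec.1.1

lemma add_orth : E.add a (E.orth a) = E.one := (E.orth_exists a).choose_spec.1.2

lemma eq_orth_of_add_eq_one (h : E.D a b) (e : E.add a b = E.one) : b = E.orth a :=
  (E.orth_exists a).choose_spec.2 b ⟨h, e⟩

lemma orth_one : E.orth E.one = E.zero := E.add_one _ (D_symm D_orth)

lemma D_one_zero : E.D E.one E.zero := orth_one (E := E) ▸ D_orth

lemma add_one_zero : E.add E.one E.zero = E.one := orth_one (E := E) ▸ add_orth

lemma D_orth_add_zero : E.D (E.add (E.orth a) a) E.zero := by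
  rw [← add_comm_of_D D_orth, add_orth]
  exact D_one_zero

lemma D_zero : E.D a E.zero := E.assoc_def₁ _ _ _ (D_symm D_orth) D_orth_add_zero

-- Both `a ⊕ 0` and `a` are orthosupplements of `a'`.
lemma add_zero_of_D : E.add a E.zero = a := by
  have e : E.add (E.orth a) (E.add a E.zero) = E.one := by
    rw [← E.assoc _ _ _ (D_symm D_orth) D_orth_add_zero, ← add_comm_of_D D_orth, add_orth,
      add_one_zero]
  have e' : E.add (E.orth a) a = E.one := by rw [← add_comm_of_D D_orth, add_orth]
  exact (eq_orth_of_add_eq_one (E.assoc_def₂ _ _ _ (D_symm D_orth) D_orth_add_zero) e).trans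
    (eq_orth_of_add_eq_one (D_symm D_orth) e').symm

lemma eq_orth_add_of_add_add_eq_one (h : E.D a b) (h' : E.D (E.add a b) x)
    (e : E.add (E.add a b) x = E.one) : b = E.orth (E.add a x) := by
  rw [add_comm_of_D h] at h' e
  have hb_ax : E.D b (E.add a x) := E.assoc_def₂ _ _ _ (D_symm h) h'
  refine eq_orth_of_add_eq_one (D_symm hb_ax) ?_
  rw [← add_comm_of_D hb_ax, ← E.assoc _ _ _ (D_symm h) h', e]

lemma add_left_cancel_of_D (hb : E.D a b) (hc : E.D a c) (h : E.add a b = E.add a c) :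
    b = c := by
  have hc' : E.D (E.add a c) (E.orth (E.add a b)) := h ▸ D_orth
  have ec : E.add (E.add a c) (E.orth (E.add a b)) = E.one := h ▸ add_orth
  rw [eq_orth_add_of_add_add_eq_one hb D_orth add_orth, eq_orth_add_of_add_add_eq_one hc hc' ec]

lemma eq_zero_of_add_eq_zero (h : E.D a b) (e : E.add a b = E.zero) : a = E.zero := by
  have h1 : E.D (E.add a b) E.one := e ▸ D_symm D_one_zero
  have hb : b = E.zero := E.add_one _ (E.assoc_def₁ _ _ _ h h1)
  calc a = E.add a E.zero := add_zero_of_D.symm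
    _ = E.zero := hb ▸ e

lemma sub_eq_of_add_eq (h : E.D a c) (e : E.add a c = b) : E.sub b a = c := by
  have hex : ∃ c, E.D a c ∧ E.add a c = b := ⟨c, h, e⟩
  rw [sub, dif_pos hex]
  exact add_left_cancel_of_D hex.choose_spec.1 h (hex.choose_spec.2.trans e.symm)

lemma D_of_le_left (h : E.le x a) (hD : E.D a b) : E.D x b := by
  obtain ⟨w, hw, rfl⟩ := h
  exact D_left_of_D_add hw hD

lemma D_of_le_right (h : E.le y b) (hD : E.D a b) : E.D a y :=
  D_symm (D_of_le_left h (D_symm hD))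

lemma add_le_add_left_of_le (h : E.le x y) (hD : E.D c y) :
    E.le (E.add c x) (E.add c y) := by
  obtain ⟨w, hw, rfl⟩ := h
  obtain ⟨-, hcxw, e⟩ := add_assoc_of_D_right hw hD
  exact ⟨w, hcxw, e⟩

-- In terms of differences: `c ≤ m` implies `b ⊖ m ≤ b ⊖ c`.
lemma le_of_add_eq_add_of_le (hcm : E.le c m) (hx : E.D c x) (hy : E.D m y)
    (e : E.add c x = E.add m y) : E.le y x := by
  obtain ⟨d, hd, rfl⟩ := hcm
  rw [E.assoc _ _ _ hd hy] at e
  have hdy : E.D d y := E.assoc_def₁ _ _ _ hd hy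
  refine ⟨d, D_symm hdy, ?_⟩
  rw [← add_comm_of_D hdy]
  exact add_left_cancel_of_D (E.assoc_def₂ _ _ _ hd hy) hx e.symm

lemma eq_zero_of_add_le_self (h : E.D m x) (hle : E.le (E.add m x) m) : x = E.zero := by
  obtain ⟨w, hw, e⟩ := hle
  rw [E.assoc _ _ _ h hw] at e
  have hxw : E.add x w = E.zero :=
    add_left_cancel_of_D (E.assoc_def₂ _ _ _ h hw) D_zero (e.trans add_zero_of_D.symm)
  exact eq_zero_of_add_eq_zero (E.assoc_def₁ _ _ _ h hw) hxw

def IsCommonRefinement (E : EffectAlgebra α) (a b a₁ b₁ c : α) : Prop :=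
  E.D a₁ b₁ ∧ E.D (E.add a₁ b₁) c ∧ E.D a₁ c ∧ E.D b₁ c ∧ E.add a₁ c = a ∧ E.add b₁ c = b

namespace IsCommonRefinement

variable {a₁ b₁ : α}

lemma symm (h : E.IsCommonRefinement a b a₁ b₁ c) : E.IsCommonRefinement b a b₁ a₁ c := by
  obtain ⟨h₁, h₂, h₃, h₄, h₅, h₆⟩ := h
  exact ⟨D_symm h₁, add_comm_of_D h₁ ▸ h₂, h₄, h₃, h₆, h₅⟩

lemma le_left (h : E.IsCommonRefinement a b a₁ b₁ c) : E.le c a :=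
  ⟨a₁, D_symm h.2.2.1, (add_comm_of_D h.2.2.1).symm.trans h.2.2.2.2.1⟩

lemma le_right (h : E.IsCommonRefinement a b a₁ b₁ c) : E.le c b := h.symm.le_left

lemma D_add (h : E.IsCommonRefinement a b a₁ b₁ c) :
    E.D a b₁ ∧ E.add a b₁ = E.add (E.add a₁ b₁) c := by
  obtain ⟨h₁, h₂, -, -, rfl, -⟩ := h
  exact add_right_comm_of_D h₁ h₂

end IsCommonRefinement

lemma isCommonRefinement_of_D (ha : E.D c a₁) (ea : E.add c a₁ = a) (hb : E.D c b₁)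
    (eb : E.add c b₁ = b) (hab : E.D a b₁) : E.IsCommonRefinement a b a₁ b₁ c := by
  subst ea eb
  have hab₁ : E.D a₁ b₁ := E.assoc_def₁ _ _ _ ha hab
  exact ⟨hab₁, D_symm (E.assoc_def₂ _ _ _ ha hab), D_symm ha, D_symm hb,
    add_comm_of_D (D_symm ha), add_comm_of_D (D_symm hb)⟩

lemma IsCommonRefinement.exists_of_le (h : E.IsCommonRefinement a b a₁ b₁ c) (hcm : E.le c m)
    (hma : E.le m a) (hmb : E.le m b) : ∃ p q, E.IsCommonRefinement a b p q m := by
  obtain ⟨p, hp, ep⟩ := hma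
  obtain ⟨q, hq, eq⟩ := hmb
  have hqb₁ : E.le q b₁ :=
    le_of_add_eq_add_of_le hcm (D_symm h.2.2.2.1)
      hq ((add_comm_of_D h.2.2.2.1).symm.trans (h.2.2.2.2.2.trans eq.symm))
  exact ⟨p, q, isCommonRefinement_of_D hp ep hq eq (D_of_le_right hqb₁ h.D_add.1)⟩

lemma exists_isCommonRefinement_of_sub_eq {s : α} (hma : E.le m a) (hmb : E.le m b)
    (has : E.le a s) (h : E.sub s a = E.sub b m) : ∃ p q, E.IsCommonRefinement a b p q m := by
  obtain ⟨p, hp, ep⟩ := hma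
  obtain ⟨q, hq, eq⟩ := hmb
  obtain ⟨r, hr, er⟩ := has
  have hrq : r = q := by rw [← sub_eq_of_add_eq hr er, h, sub_eq_of_add_eq hq eq]
  exact ⟨p, q, isCommonRefinement_of_D hp ep hq eq (hrq ▸ hr)⟩

lemma IsCommonRefinement.sub_eq_sub_of_isGLB_of_isLUB {p q s : α}
    (h : E.IsCommonRefinement a b p q m) (hglb : ∀ x, E.le x a → E.le x b → E.le x m)
    (has : E.le a s) (hbs : E.le b s) (hlub : ∀ x, E.le a x → E.le b x → E.le s x) :
    E.sub s a = E.sub b m := by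
  obtain ⟨haq, eaq⟩ := h.D_add
  obtain ⟨hbp, ebp⟩ := h.symm.D_add
  have hswap : E.add a q = E.add b p := by rw [eaq, ebp, add_comm_of_D h.1]
  obtain ⟨r, hsr, esr⟩ : E.le s (E.add a q) := hlub _ ⟨q, haq, rfl⟩ ⟨p, hbp, hswap.symm⟩
  have hrq : E.le r q := le_of_add_eq_add_of_le has haq hsr esr.symm
  have hrp : E.le r p := le_of_add_eq_add_of_le hbs hbp hsr (hswap.symm.trans esr.symm)
  have hmp : E.D m p := D_symm h.2.2.1
  have hmq : E.D m q := D_symm h.2.2.2.1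
  have emp : E.add m p = a := (add_comm_of_D hmp).trans h.2.2.2.2.1
  have emq : E.add m q = b := (add_comm_of_D hmq).trans h.2.2.2.2.2
  have hmr_le : E.le (E.add m r) m :=
    hglb _ (emp ▸ add_le_add_left_of_le hrp hmp) (emq ▸ add_le_add_left_of_le hrq hmq)
  have hr0 : r = E.zero := eq_zero_of_add_le_self (D_of_le_right hrp hmp) hmr_le
  rw [sub_eq_of_add_eq haq (by rw [← esr, hr0, add_zero_of_D]), sub_eq_of_add_eq hmq emq]

end EffectAlgebra

/-- a lattice-ordered effect algebra is an MV-effect algebra iff every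
pair `a, b` has a common refinement `a = a₁ ⊕ c`, `b = b₁ ⊕ c` with `a₁ ⊕ b₁ ⊕ c` defined. -/
theorem stmt3 {α : Type*} (E : EffectAlgebra α) (sup inf : α → α → α)
    (hsup : ∀ a b : α, E.le a (sup a b) ∧ E.le b (sup a b) ∧
      ∀ c, E.le a c → E.le b c → E.le (sup a b) c)
    (hinf : ∀ a b : α, E.le (inf a b) a ∧ E.le (inf a b) b ∧
      ∀ c, E.le c a → E.le c b → E.le c (inf a b)) :
    (∀ a b : α, E.sub (sup a b) a = E.sub b (inf a b)) ↔
      (∀ a b : α, ∃ a₁ b₁ c : α, E.D a₁ b₁ ∧ E.D (E.add a₁ b₁) c ∧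
        E.D a₁ c ∧ E.D b₁ c ∧ E.add a₁ c = a ∧ E.add b₁ c = b) := by
  constructor
  · intro hMV a b
    obtain ⟨p, q, h⟩ := EffectAlgebra.exists_isCommonRefinement_of_sub_eq
      (hinf a b).1 (hinf a b).2.1 (hsup a b).1 (hMV a b)
    exact ⟨p, q, inf a b, h⟩
  · intro hRef a b
    obtain ⟨a₁, b₁, c, hc⟩ : ∃ a₁ b₁ c, EffectAlgebra.IsCommonRefinement E a b a₁ b₁ c :=
      hRef a b
    obtain ⟨p, q, hm⟩ := hc.exists_of_le ((hinf a b).2.2 c hc.le_left hc.le_right)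
      (hinf a b).1 (hinf a b).2.1
    exact hm.sub_eq_sub_of_isGLB_of_isLUB (hinf a b).2.2 (hsup a b).1 (hsup a b).2.1
      (hsup a b).2.2
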